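/- arXiv:2105.07457 — 8 statements merged into one kernel-verified Lean document; each statement's English description precedes it below -/
import Mathlib

section
/- For every binary relation r on a type A there exists a greatest interpolative relation r₀ contained in r: r₀ is contained in r, r₀ is interpolative, and every interpolative relation contained in r is contained in r₀. -/
/-- A binary relation `r` is interpolative if `r x y` implies there is `z`
with `r x z` and `r z y`. -/
def Interpolative {A : Type*} (r : A → A → Prop) : Prop :=
  ∀ x y, r x y → ∃ z, r x z ∧ r z y

/-- For every binary relation `r` on a type `A` there exists a greatest
interpolative relation `r₀` contained in `r`. -/
theorem exists_greatest_interpolative {A : Type*} (r : A → A → Prop) :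
    ∃ r₀ : A → A → Prop,
      (∀ x y, r₀ x y → r x y) ∧
      Interpolative r₀ ∧
      (∀ s : A → A → Prop, Interpolative s → (∀ x y, s x y → r x y) →
        ∀ x y, s x y → r₀ x y) := by
  refine ⟨fun x y => ∃ s : A → A → Prop, Interpolative s ∧ (∀ a b, s a b → r a b) ∧ s x y,
    ?_, ?_, ?_⟩
  · rintro x y ⟨s, _, hle, hxy⟩
    exact hle x y hxy
  · rintro x y ⟨s, hint, hle, hxy⟩
    obtain ⟨z, hxz, hzy⟩ := hint x y hxy
    exact ⟨z, ⟨s, hint, hle, hxz⟩, ⟨s, hint, hle, hzy⟩⟩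
  · intro s hint hle x y hxy
    exact ⟨s, hint, hle, hxy⟩
end

section
/- If g : M → L is a dense frame homomorphism, M is a regular frame, L is a compact frame, then g is codense: g a = ⊤ implies a = ⊤. -/
/-- The well-inside relation of a frame: `b` is well inside `a` iff `bᶜ ⊔ a = ⊤`. -/
def WellInside {L : Type*} [Order.Frame L] (b a : L) : Prop := bᶜ ⊔ a = ⊤

/-- A frame is regular if every element is the join of the elements well inside it. -/
def IsRegularFrame (L : Type*) [Order.Frame L] : Prop :=
  ∀ a : L, a = sSup {b | WellInside b a}

/-- A frame is compact if `⊤` is a compact element. -/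
def IsCompactFrame (L : Type*) [Order.Frame L] : Prop :=
  ∀ S : Set L, ⊤ ≤ sSup S → ∃ T : Set L, T ⊆ S ∧ T.Finite ∧ ⊤ ≤ sSup T

/-!
The elements well inside `a` form a directed set (well-insideness is preserved by finite joins)
whose join is `a`. If `g a = ⊤`, compactness of `L` applied to the directed cover
`g '' {b | b ≺ a}` of `⊤` yields a single `b ≺ a` with `g b = ⊤`. Then `g bᶜ = g bᶜ ⊓ g b = ⊥`,
so density gives `bᶜ = ⊥`, and `a = bᶜ ⊔ a = ⊤`.
-/

section WellInside

variable {M : Type*} [Order.Frame M] {a b₁ b₂ : M}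

lemma wellInside_bot_left (a : M) : WellInside ⊥ a := by
  simp [WellInside]

lemma WellInside.sup_left (h₁ : WellInside b₁ a) (h₂ : WellInside b₂ a) :
    WellInside (b₁ ⊔ b₂) a := by
  rw [WellInside, compl_sup, sup_inf_right, h₁, h₂, inf_top_eq]

lemma directedOn_wellInside (a : M) : DirectedOn (· ≤ ·) {b | WellInside b a} :=
  SupClosed.directedOn fun _ h₁ _ h₂ => WellInside.sup_left h₁ h₂

lemma WellInside.eq_top_of_compl_eq_bot {b : M} (h : WellInside b a) (hb : bᶜ = ⊥) : a = ⊤ := by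
  rwa [WellInside, hb, bot_sup_eq] at h

end WellInside

lemma IsCompactFrame.isCompactElement_top {L : Type*} [Order.Frame L] (hL : IsCompactFrame L) :
    IsCompactElement (⊤ : L) := by
  rw [CompleteLattice.isCompactElement_iff_exists_le_sSup_of_le_sSup]
  intro S hS
  obtain ⟨T, hTS, hT, hTtop⟩ := hL S hS
  exact ⟨hT.toFinset, by simpa using hTS, by simpa [Finset.sup_id_eq_sSup] using hTtop⟩

lemma compl_eq_bot_of_map_eq_top {M L F : Type*} [HeytingAlgebra M] [Lattice L] [BoundedOrder L]
    [FunLike F M L] [InfHomClass F M L] [BotHomClass F M L] {g : F}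
    (hdense : ∀ a : M, g a = ⊥ → a = ⊥) {b : M} (hb : g b = ⊤) : bᶜ = ⊥ :=
  hdense _ <| by rw [← inf_top_eq (g bᶜ), ← hb, ← map_inf, compl_inf_self, map_bot]

/-- A dense frame homomorphism from a regular frame to a compact frame is codense. -/
theorem dense_frameHom_codense
    {M L : Type*} [Order.Frame M] [Order.Frame L] (g : FrameHom M L)
    (hdense : ∀ a : M, g a = ⊥ → a = ⊥)
    (hreg : IsRegularFrame M) (hcomp : IsCompactFrame L) :
    ∀ a : M, g a = ⊤ → a = ⊤ := by
  intro a hga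
  have hcover : ⊤ ≤ sSup (g '' {b | WellInside b a}) := by
    rw [← map_sSup, ← hreg a, hga]
  have hne : (g '' {b | WellInside b a}).Nonempty := ⟨g ⊥, ⊥, wellInside_bot_left a, rfl⟩
  have hdir := (directedOn_wellInside a).mono_comp fun _ _ h => OrderHomClass.mono g h
  obtain ⟨_, ⟨b, hba, rfl⟩, hgb⟩ :=
    (CompleteLattice.isCompactElement_iff_le_of_directed_sSup_le L ⊤).mp
      hcomp.isCompactElement_top _ hne hdir hcover
  exact hba.eq_top_of_compl_eq_bot (compl_eq_bot_of_map_eq_top hdense (top_le_iff.mp hgb))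
end

section
/- If h : M → L is a dense frame homomorphism, N is a regular frame, and f, g : N → M are frame homomorphisms with h ∘ f = h ∘ g, then f = g. -/
/-- Dense frame homomorphisms are epimorphisms with respect to regular domains:
if `h : M → L` is dense, `N` is regular and `h ∘ f = h ∘ g` then `f = g`. -/
theorem dense_frameHom_cancel
    {N M L : Type*} [Order.Frame N] [Order.Frame M] [Order.Frame L]
    (h : FrameHom M L) (hdense : ∀ a : M, h a = ⊥ → a = ⊥)
    (hregN : IsRegularFrame N)
    (f g : FrameHom N M) (hfg : h.comp f = h.comp g) :
    f = g := by
  have key : ∀ f g : FrameHom N M, h.comp f = h.comp g → ∀ a : N, f a ≤ g a := by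
    intro f g hfg a
    have hfg' : ∀ x : N, h (f x) = h (g x) := fun x =>
      congrArg (fun φ : FrameHom N L => φ x) hfg
    conv_lhs => rw [hregN a]
    rw [map_sSup]
    apply sSup_le
    rintro x ⟨b, hb, rfl⟩
    -- hb : WellInside b a, i.e. bᶜ ⊔ a = ⊤
    have hbot : f b ⊓ g bᶜ = ⊥ := by
      apply hdense
      rw [map_inf, hfg' b, ← map_inf, ← map_inf]
      have : b ⊓ bᶜ = ⊥ := inf_compl_self b
      rw [this, map_bot, map_bot]
    have htop : g bᶜ ⊔ g a = ⊤ := by rw [← map_sup, hb, map_top]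
    calc f b = f b ⊓ (g bᶜ ⊔ g a) := by rw [htop, inf_top_eq]
      _ = (f b ⊓ g bᶜ) ⊔ (f b ⊓ g a) := inf_sup_left _ _ _
      _ = f b ⊓ g a := by rw [hbot, bot_sup_eq]
      _ ≤ g a := inf_le_right
  exact FrameHom.ext fun a => le_antisymm (key f g hfg a) (key g f hfg.symm a)
end

section
/- Let L be a compact regular frame and P ⊆ L a basis of L closed under binary meets and binary joins. If b ∈ L, U ⊆ P and b ≺ sSup U, then either b = ⊥ or there exist n ≥ 1 and functions p, p', p'' : Fin n → L with values in P such that for each i: p i ≺ p' i, p' i ≺ p'' i and p'' i ∈ U, and moreover b ≤ ⨆ i, p i, (⨆ i, p i) ≺ (⨆ i, p' i), and (⨆ i, p' i) ≺ sSup U. -/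
/-- A subset `P` of a frame `L` is a basis if every element of `L` is the join
of the elements of `P` below it. -/
def IsBasis {L : Type*} [Order.Frame L] (P : Set L) : Prop :=
  ∀ a : L, a = sSup {p | p ∈ P ∧ p ≤ a}

/-! A compact regular frame lets one pass to finite joins: since `b ≺ ⋁ U` means `bᶜ ⊔ ⋁ U = ⊤`,
refining every `u ∈ U` twice by basis elements well inside it (regularity plus the basis property)
gives a cover of `⊤` by `bᶜ` and basis elements `p ≺ p' ≺ u`, and compactness extracts finitely many
of them. Finite joins preserve `≺`, because in a frame `(x ⊔ y)ᶜ = xᶜ ⊓ yᶜ` and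
`(xᶜ ⊓ yᶜ) ⊔ a = (xᶜ ⊔ a) ⊓ (yᶜ ⊔ a)`. -/

namespace WellInside

variable {L : Type*} [Order.Frame L] {a a' b b' : L}

lemma mono_right (h : WellInside b a) (ha : a ≤ a') : WellInside b a' :=
  top_le_iff.mp (h ▸ sup_le_sup_left ha _)

lemma anti_left (hb : b' ≤ b) (h : WellInside b a) : WellInside b' a :=
  top_le_iff.mp (h ▸ sup_le_sup_right (compl_le_compl hb) _)

lemma le (h : WellInside b a) : b ≤ a :=
  calc b = b ⊓ (bᶜ ⊔ a) := by rw [h, inf_top_eq]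
    _ = b ⊓ a := by rw [inf_sup_left, inf_compl_self, bot_sup_eq]
    _ ≤ a := inf_le_right

lemma bot_left : WellInside (⊥ : L) a := by
  rw [WellInside, compl_bot, top_sup_eq]

lemma sup_left_s5 (hb : WellInside b a) (hb' : WellInside b' a) : WellInside (b ⊔ b') a := by
  rw [WellInside, compl_sup, sup_inf_right, hb, hb', inf_top_eq]

lemma iSup_left {ι : Type*} [Finite ι] {p : ι → L} (h : ∀ i, WellInside (p i) a) :
    WellInside (⨆ i, p i) a := by
  have := Fintype.ofFinite ι
  rw [← Finset.sup_univ_eq_iSup]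
  exact Finset.sup_induction (p := (WellInside · a)) bot_left (fun _ h₁ _ h₂ => h₁.sup_left_s5 h₂) fun i _ => h i

lemma iSup {ι : Type*} [Finite ι] {p q : ι → L} (h : ∀ i, WellInside (p i) (q i)) :
    WellInside (⨆ i, p i) (⨆ i, q i) :=
  iSup_left fun i => (h i).mono_right (le_iSup q i)

end WellInside

namespace IsRegularFrame

variable {L : Type*} [Order.Frame L] {P : Set L}

lemma le_sSup_basis_wellInside (hr : IsRegularFrame L) (hP : IsBasis P) (a : L) :
    a ≤ sSup {q | q ∈ P ∧ WellInside q a} := by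
  conv_lhs => rw [hr a]
  exact sSup_le fun x hx =>
    (hP x).le.trans (sSup_le_sSup fun p hp => ⟨hp.1, hx.anti_left hp.2⟩)

lemma sSup_le_sSup_basis_wellInside_wellInside (hr : IsRegularFrame L) (hP : IsBasis P)
    (U : Set L) :
    sSup U ≤ sSup {p | p ∈ P ∧ ∃ p' ∈ P, WellInside p p' ∧ ∃ u ∈ U, WellInside p' u} := by
  refine sSup_le fun u hu => (hr.le_sSup_basis_wellInside hP u).trans (sSup_le fun q hq => ?_)
  refine (hr.le_sSup_basis_wellInside hP q).trans (sSup_le fun p hp => le_sSup ?_)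
  exact ⟨hp.1, q, hq.1, hp.2, u, hu, hq.2⟩

end IsRegularFrame

lemma IsCompactFrame.exists_finite_subset_wellInside_sSup {L : Type*} [Order.Frame L]
    (hc : IsCompactFrame L) {b : L} {V : Set L} (hb : WellInside b (sSup V)) :
    ∃ T ⊆ V, T.Finite ∧ WellInside b (sSup T) := by
  have hcover : ⊤ ≤ sSup (insert bᶜ V) := by rw [sSup_insert, hb]
  obtain ⟨T, hTV, hTfin, hTtop⟩ := hc _ hcover
  refine ⟨T \ {bᶜ}, fun x hx => (hTV hx.1).resolve_left hx.2, hTfin.sdiff, top_le_iff.mp ?_⟩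
  calc ⊤ ≤ sSup T := hTtop
    _ ≤ sSup (insert bᶜ (T \ {bᶜ})) := sSup_le_sSup fun x hx => by
        by_cases hxb : x = bᶜ
        · exact Or.inl hxb
        · exact Or.inr ⟨hx, hxb⟩
    _ = bᶜ ⊔ sSup (T \ {bᶜ}) := sSup_insert

lemma IsCompactFrame.exists_fin_family_le_iSup {L : Type*} [Order.Frame L]
    (hc : IsCompactFrame L) {b : L} {V : Set L} (hb : WellInside b (sSup V)) :
    ∃ (n : ℕ) (p : Fin n → L), (∀ i, p i ∈ V) ∧ b ≤ ⨆ i, p i := by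
  obtain ⟨T, hTV, hTfin, hbT⟩ := hc.exists_finite_subset_wellInside_sSup hb
  obtain ⟨n, p, hp⟩ := hTfin.fin_embedding
  refine ⟨n, p, fun i => hTV (hp ▸ Set.mem_range_self i), ?_⟩
  rw [← sSup_range, hp]
  exact hbT.le

theorem compact_regular_cover_lemma_general
    {L : Type*} [Order.Frame L] (hc : IsCompactFrame L) (hr : IsRegularFrame L)
    (P : Set L) (hP : IsBasis P)
    (b : L) (U : Set L) (hU : U ⊆ P) (hb : WellInside b (sSup U)) :
    b = ⊥ ∨
      ∃ (n : ℕ), 1 ≤ n ∧ ∃ p p' p'' : Fin n → L,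
        (∀ i, p i ∈ P ∧ p' i ∈ P ∧ p'' i ∈ P) ∧
        (∀ i, WellInside (p i) (p' i) ∧ WellInside (p' i) (p'' i) ∧ p'' i ∈ U) ∧
        b ≤ (⨆ i, p i) ∧
        WellInside (⨆ i, p i) (⨆ i, p' i) ∧
        WellInside (⨆ i, p' i) (sSup U) := by
  obtain ⟨n, p, hpV, hbp⟩ := hc.exists_fin_family_le_iSup
    (hb.mono_right (hr.sSup_le_sSup_basis_wellInside_wellInside hP U))
  rcases Nat.eq_zero_or_pos n with rfl | hn
  · exact Or.inl (le_bot_iff.mp (hbp.trans_eq (iSup_of_empty _)))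
  choose hpP p' hp'P hpp' p'' hp''U hp'p'' using hpV
  have hp'U : ∀ i, WellInside (p' i) (sSup U) :=
    fun i => (hp'p'' i).mono_right (le_sSup (hp''U i))
  exact Or.inr ⟨n, hn, p, p', p'', fun i => ⟨hpP i, hp'P i, hU (hp''U i)⟩,
    fun i => ⟨hpp' i, hp'p'' i, hp''U i⟩, hbp, WellInside.iSup hpp', WellInside.iSup_left hp'U⟩

/-- Lemma 4.5 of the paper: in a compact regular frame with a basis `P` closed
under binary meets and joins, any `b` well inside `sSup U` (with `U ⊆ P`) is
either `⊥` or covered by suitable finite families from `P`. -/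
theorem compact_regular_cover_lemma
    {L : Type*} [Order.Frame L] (hc : IsCompactFrame L) (hr : IsRegularFrame L)
    (P : Set L) (hP : IsBasis P)
    (hmeet : ∀ x ∈ P, ∀ y ∈ P, x ⊓ y ∈ P) (hjoin : ∀ x ∈ P, ∀ y ∈ P, x ⊔ y ∈ P)
    (b : L) (U : Set L) (hU : U ⊆ P) (hb : WellInside b (sSup U)) :
    b = ⊥ ∨
      ∃ (n : ℕ), 1 ≤ n ∧ ∃ p p' p'' : Fin n → L,
        (∀ i, p i ∈ P ∧ p' i ∈ P ∧ p'' i ∈ P) ∧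
        (∀ i, WellInside (p i) (p' i) ∧ WellInside (p' i) (p'' i) ∧ p'' i ∈ U) ∧
        b ≤ (⨆ i, p i) ∧
        WellInside (⨆ i, p i) (⨆ i, p' i) ∧
        WellInside (⨆ i, p' i) (sSup U) :=
  compact_regular_cover_lemma_general hc hr P hP b U hU hb
end

section
/- Let L be a compact regular frame and P ⊆ L a basis of L closed under binary meets and binary joins. If a, b ∈ P and b ≺ a, then there exist p, q ∈ P with b ≤ p, p ≺ q and q ≺ a. -/
/-!
Regularity and the basis property write `a` as the join of the set `S` of basis elements well
inside `a`, so `⊤ = bᶜ ⊔ a ≤ bᶜ ⊔ sSup S`. Since `P` is closed under joins and `· ≺ a` is closed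
under binary joins, `S` is directed, and compactness of `⊤` yields a single `q ∈ S` with
`bᶜ ⊔ q = ⊤`, i.e. `b ≺ q ≺ a`; take `p = b`.
-/

section WellInside

variable {L : Type*} [Order.Frame L] {a b c : L}

theorem WellInside.of_le (hcb : c ≤ b) (h : WellInside b a) : WellInside c a :=
  top_le_iff.mp (h ▸ sup_le_sup_right (compl_le_compl hcb) a)

theorem WellInside.sup (hb : WellInside b a) (hc : WellInside c a) : WellInside (b ⊔ c) a := by
  rw [WellInside, compl_sup, sup_inf_right, hb, hc, inf_top_eq]

theorem IsCompactFrame.isCompactElement_top_s6 (hc : IsCompactFrame L) : IsCompactElement (⊤ : L) := by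
  classical
  refine (CompleteLattice.isCompactElement_iff_exists_le_sSup_of_le_sSup L ⊤).2 fun S hS => ?_
  obtain ⟨T, hTS, hT, hTtop⟩ := hc S hS
  exact ⟨hT.toFinset, by simpa using hTS, by simpa [Finset.sup_id_eq_sSup] using hTtop⟩

theorem IsCompactElement.exists_sup_eq_top_of_supClosed (htop : IsCompactElement (⊤ : L))
    {S : Set L} (hS : SupClosed S) (hne : S.Nonempty) (h : ⊤ ≤ c ⊔ sSup S) :
    ∃ s ∈ S, c ⊔ s = ⊤ := by
  have ⟨s₀, hs₀⟩ := hne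
  have hdir : DirectedOn (· ≤ ·) ((c ⊔ ·) '' S) :=
    hS.directedOn.mono_comp fun _ _ hxy => sup_le_sup_left hxy c
  have hle : c ⊔ sSup S ≤ sSup ((c ⊔ ·) '' S) :=
    sup_le (le_sSup_of_le ⟨s₀, hs₀, rfl⟩ le_sup_left)
      (sSup_le fun s hs => le_sSup_of_le ⟨s, hs, rfl⟩ le_sup_right)
  obtain ⟨_, ⟨s, hs, rfl⟩, hstop⟩ :=
    (CompleteLattice.isCompactElement_iff_le_of_directed_sSup_le L ⊤).1 htop _
      (hne.image _) hdir (h.trans hle)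
  exact ⟨s, hs, top_le_iff.mp hstop⟩

variable {P : Set L}

theorem le_sSup_basis_wellInside (hr : IsRegularFrame L) (hP : IsBasis P) (a : L) :
    a ≤ sSup {p | p ∈ P ∧ WellInside p a} := by
  refine (hr a).le.trans (sSup_le fun x hx => (hP x).le.trans (sSup_le_sSup ?_))
  rintro p ⟨hpP, hpx⟩
  exact ⟨hpP, hx.of_le hpx⟩

theorem supClosed_basis_wellInside (hjoin : ∀ x ∈ P, ∀ y ∈ P, x ⊔ y ∈ P) (a : L) :
    SupClosed {p | p ∈ P ∧ WellInside p a} :=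
  fun _ hx _ hy => ⟨hjoin _ hx.1 _ hy.1, hx.2.sup hy.2⟩

theorem WellInside.exists_basis_interpolant (hc : IsCompactFrame L) (hr : IsRegularFrame L)
    (hP : IsBasis P) (hjoin : ∀ x ∈ P, ∀ y ∈ P, x ⊔ y ∈ P) (hb : b ∈ P) (hba : WellInside b a) :
    ∃ q ∈ P, WellInside b q ∧ WellInside q a := by
  have htop : ⊤ ≤ bᶜ ⊔ sSup {p | p ∈ P ∧ WellInside p a} :=
    hba ▸ sup_le_sup_left (le_sSup_basis_wellInside hr hP a) _
  obtain ⟨q, ⟨hqP, hqa⟩, hbq⟩ := hc.isCompactElement_top_s6.exists_sup_eq_top_of_supClosed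
    (supClosed_basis_wellInside hjoin a) ⟨b, hb, hba⟩ htop
  exact ⟨q, hqP, hbq, hqa⟩

end WellInside

theorem compact_regular_basis_interpolation_general
    {L : Type*} [Order.Frame L] (hc : IsCompactFrame L) (hr : IsRegularFrame L)
    (P : Set L) (hP : IsBasis P)
    (hjoin : ∀ x ∈ P, ∀ y ∈ P, x ⊔ y ∈ P)
    (a b : L) (hb : b ∈ P) (hba : WellInside b a) :
    ∃ p ∈ P, ∃ q ∈ P, b ≤ p ∧ WellInside p q ∧ WellInside q a := by
  obtain ⟨q, hqP, hbq, hqa⟩ := hba.exists_basis_interpolant hc hr hP hjoin hb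
  exact ⟨b, hb, q, hqP, le_rfl, hbq, hqa⟩

/-- In a compact regular frame with a basis `P` closed under binary meets and
joins, the well-inside relation interpolates (twice) on `P`. -/
theorem compact_regular_basis_interpolation
    {L : Type*} [Order.Frame L] (hc : IsCompactFrame L) (hr : IsRegularFrame L)
    (P : Set L) (hP : IsBasis P)
    (hmeet : ∀ x ∈ P, ∀ y ∈ P, x ⊓ y ∈ P) (hjoin : ∀ x ∈ P, ∀ y ∈ P, x ⊔ y ∈ P)
    (a b : L) (ha : a ∈ P) (hb : b ∈ P) (hba : WellInside b a) :
    ∃ p ∈ P, ∃ q ∈ P, b ≤ p ∧ WellInside p q ∧ WellInside q a :=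
  compact_regular_basis_interpolation_general hc hr P hP hjoin a b hb hba
end

section
/- Let P be a sub-pcd-lattice of a frame L. Then the greatest interpolative relation contained in the restriction of the well-inside relation ≺ to P × P is a strong inclusion on P: it satisfies conditions (1)–(7) of a strong inclusion. -/
/-- The greatest interpolative relation contained in `r`: the union of all
interpolative relations contained in `r`. -/
def gis {A : Type*} (r : A → A → Prop) : A → A → Prop :=
  fun x y => ∃ s : A → A → Prop,
    (∀ a b, s a b → r a b) ∧ Interpolative s ∧ s x y

/-- A sub-pcd-lattice of a frame `L`: a subset containing `⊥` and `⊤`, closed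
under binary meets, binary joins and pseudocomplements (computed in `L`). -/
def IsSubPcdLattice {L : Type*} [Order.Frame L] (P : Set L) : Prop :=
  ⊥ ∈ P ∧ ⊤ ∈ P ∧ (∀ x ∈ P, ∀ y ∈ P, x ⊓ y ∈ P) ∧
    (∀ x ∈ P, ∀ y ∈ P, x ⊔ y ∈ P) ∧ (∀ x ∈ P, xᶜ ∈ P)

/-- A strong inclusion on a sub-pcd-lattice `P` of a frame `L`:
conditions (1)–(7) of Banaschewski. -/
def IsStrongInclusion {L : Type*} [Order.Frame L] (P : Set L) (r : L → L → Prop) : Prop :=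
  (r ⊥ ⊥ ∧ r ⊤ ⊤) ∧
  (∀ x a b y, x ∈ P → y ∈ P → x ≤ a → r a b → b ≤ y → r x y) ∧
  (∀ x a b, r x a → r x b → r x (a ⊓ b)) ∧
  (∀ x y a, r x a → r y a → r (x ⊔ y) a) ∧
  (∀ a b, r a b → r bᶜ aᶜ) ∧
  (∀ a b, r a b → WellInside a b) ∧
  (∀ a b, r a b → ∃ z ∈ P, r a z ∧ r z b)

/-- The restriction of the well-inside relation of `L` to a subset `P`. -/
def WellInsideOn {L : Type*} [Order.Frame L] (P : Set L) (b a : L) : Prop :=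
  b ∈ P ∧ a ∈ P ∧ WellInside b a

lemma gis_le {A : Type*} {r : A → A → Prop} {x y : A} (h : gis r x y) : r x y := by
  obtain ⟨s, hs, _, hxy⟩ := h
  exact hs _ _ hxy

lemma gis_interp {A : Type*} {r : A → A → Prop} {x y : A} (h : gis r x y) :
    ∃ z, gis r x z ∧ gis r z y := by
  obtain ⟨s, hs, hi, hxy⟩ := h
  obtain ⟨z, h1, h2⟩ := hi _ _ hxy
  exact ⟨z, ⟨s, hs, hi, h1⟩, ⟨s, hs, hi, h2⟩⟩

lemma gis_mono {L : Type*} [Order.Frame L] {P : Set L} {x a b y : L}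
    (hx : x ∈ P) (hy : y ∈ P) (hxa : x ≤ a) (h : gis (WellInsideOn P) a b) (hby : b ≤ y) :
    gis (WellInsideOn P) x y := by
  refine ⟨fun u v => u ∈ P ∧ v ∈ P ∧ ∃ c d, u ≤ c ∧ gis (WellInsideOn P) c d ∧ d ≤ v,
    ?_, ?_, hx, hy, a, b, hxa, h, hby⟩
  · rintro u v ⟨hu, hv, c, d, huc, hcd, hdv⟩
    obtain ⟨_, _, hwi⟩ := gis_le hcd
    refine ⟨hu, hv, ?_⟩
    have : cᶜ ⊔ d ≤ uᶜ ⊔ v := sup_le_sup (compl_le_compl huc) hdv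
    exact top_le_iff.mp (hwi ▸ this)
  · rintro u v ⟨hu, hv, c, d, huc, hcd, hdv⟩
    obtain ⟨z, h1, h2⟩ := gis_interp hcd
    obtain ⟨_, hzP, _⟩ := gis_le h1
    exact ⟨z, ⟨hu, hzP, c, z, huc, h1, le_rfl⟩, ⟨hzP, hv, z, d, le_rfl, h2, hdv⟩⟩


/-- The greatest interpolative relation contained in the restriction of the
well-inside relation to a sub-pcd-lattice `P` is a strong inclusion on `P`. -/
theorem gis_wellInsideOn_isStrongInclusion
    {L : Type*} [Order.Frame L] (P : Set L) (hP : IsSubPcdLattice P) :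
    IsStrongInclusion P (gis (WellInsideOn P)) := by
  obtain ⟨hbot, htop, hmeet, hjoin, hcompl⟩ := hP
  set W := WellInsideOn P with hW
  refine ⟨⟨?_, ?_⟩, ?_, ?_, ?_, ?_, ?_, ?_⟩
  · -- ⊥ ⊲ ⊥
    refine ⟨fun u v => u = ⊥ ∧ v = ⊥, ?_, ?_, rfl, rfl⟩
    · rintro u v ⟨rfl, rfl⟩
      exact ⟨hbot, hbot, by simp [WellInside]⟩
    · rintro u v ⟨rfl, rfl⟩; exact ⟨⊥, ⟨rfl, rfl⟩, ⟨rfl, rfl⟩⟩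
  · -- ⊤ ⊲ ⊤
    refine ⟨fun u v => u = ⊤ ∧ v = ⊤, ?_, ?_, rfl, rfl⟩
    · rintro u v ⟨rfl, rfl⟩
      exact ⟨htop, htop, by simp [WellInside]⟩
    · rintro u v ⟨rfl, rfl⟩; exact ⟨⊤, ⟨rfl, rfl⟩, ⟨rfl, rfl⟩⟩
  · -- (2)
    exact fun x a b y hx hy hxa h hby => gis_mono hx hy hxa h hby
  · -- (3) meets
    intro x a b hxa hxb
    refine ⟨fun u v => gis W u v ∨ (u ∈ P ∧ ∃ c d, gis W u c ∧ gis W u d ∧ v = c ⊓ d),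
      ?_, ?_, Or.inr ⟨(gis_le hxa).1, a, b, hxa, hxb, rfl⟩⟩
    · rintro u v (h | ⟨hu, c, d, hc, hd, rfl⟩)
      · exact gis_le h
      · obtain ⟨_, hcP, hwic⟩ := gis_le hc
        obtain ⟨_, hdP, hwid⟩ := gis_le hd
        refine ⟨hu, hmeet _ hcP _ hdP, ?_⟩
        unfold WellInside at *
        rw [sup_inf_left, hwic, hwid, inf_top_eq]
    · rintro u v (h | ⟨hu, c, d, hc, hd, rfl⟩)
      · obtain ⟨z, h1, h2⟩ := gis_interp h
        exact ⟨z, Or.inl h1, Or.inl h2⟩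
      · obtain ⟨z1, hz1, hz1'⟩ := gis_interp hc
        obtain ⟨z2, hz2, hz2'⟩ := gis_interp hd
        obtain ⟨_, hz1P, _⟩ := gis_le hz1
        obtain ⟨_, hz2P, _⟩ := gis_le hz2
        have hzP : z1 ⊓ z2 ∈ P := hmeet _ hz1P _ hz2P
        obtain ⟨_, hcP, _⟩ := gis_le hc
        obtain ⟨_, hdP, _⟩ := gis_le hd
        refine ⟨z1 ⊓ z2, Or.inr ⟨hu, z1, z2, hz1, hz2, rfl⟩,
          Or.inr ⟨hzP, c, d, ?_, ?_, rfl⟩⟩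
        · exact gis_mono hzP hcP inf_le_left hz1' le_rfl
        · exact gis_mono hzP hdP inf_le_right hz2' le_rfl
  · -- (4) joins
    intro x y a hxa hya
    refine ⟨fun u v => gis W u v ∨ (v ∈ P ∧ ∃ c d, gis W c v ∧ gis W d v ∧ u = c ⊔ d),
      ?_, ?_, Or.inr ⟨(gis_le hxa).2.1, x, y, hxa, hya, rfl⟩⟩
    · rintro u v (h | ⟨hv, c, d, hc, hd, rfl⟩)
      · exact gis_le h
      · obtain ⟨hcP, _, hwic⟩ := gis_le hc
        obtain ⟨hdP, _, hwid⟩ := gis_le hd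
        refine ⟨hjoin _ hcP _ hdP, hv, ?_⟩
        unfold WellInside at *
        rw [compl_sup, sup_inf_right, hwic, hwid, inf_top_eq]
    · rintro u v (h | ⟨hv, c, d, hc, hd, rfl⟩)
      · obtain ⟨z, h1, h2⟩ := gis_interp h
        exact ⟨z, Or.inl h1, Or.inl h2⟩
      · obtain ⟨z1, hz1, hz1'⟩ := gis_interp hc
        obtain ⟨z2, hz2, hz2'⟩ := gis_interp hd
        obtain ⟨hz1P, _, _⟩ := gis_le hz1'
        obtain ⟨hz2P, _, _⟩ := gis_le hz2'
        have hzP : z1 ⊔ z2 ∈ P := hjoin _ hz1P _ hz2P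
        obtain ⟨hcP, _, _⟩ := gis_le hc
        obtain ⟨hdP, _, _⟩ := gis_le hd
        refine ⟨z1 ⊔ z2, Or.inr ⟨hzP, c, d, ?_, ?_, rfl⟩,
          Or.inr ⟨hv, z1, z2, hz1', hz2', rfl⟩⟩
        · exact gis_mono hcP hzP le_rfl hz1 le_sup_left
        · exact gis_mono hdP hzP le_rfl hz2 le_sup_right
  · -- (5) pseudocomplements
    intro a b hab
    refine ⟨fun u v => ∃ c d, gis W c d ∧ u = dᶜ ∧ v = cᶜ,
      ?_, ?_, a, b, hab, rfl, rfl⟩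
    · rintro u v ⟨c, d, hcd, rfl, rfl⟩
      obtain ⟨hcP, hdP, hwi⟩ := gis_le hcd
      refine ⟨hcompl _ hdP, hcompl _ hcP, ?_⟩
      unfold WellInside at *
      have : cᶜ ⊔ d ≤ dᶜᶜ ⊔ cᶜ := by
        rw [sup_comm]
        exact sup_le_sup le_compl_compl le_rfl
      exact top_le_iff.mp (hwi ▸ this)
    · rintro u v ⟨c, d, hcd, rfl, rfl⟩
      obtain ⟨z, h1, h2⟩ := gis_interp hcd
      exact ⟨zᶜ, ⟨z, d, h2, rfl, rfl⟩, ⟨c, z, h1, rfl, rfl⟩⟩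
  · -- (6)
    exact fun a b h => (gis_le h).2.2
  · -- (7)
    intro a b h
    obtain ⟨z, h1, h2⟩ := gis_interp h
    exact ⟨z, (gis_le h1).2.1, h1, h2⟩
end

section
/- Let P be a sub-pcd-lattice of a frame L and R an interpolative binary relation on P contained in the well-inside relation ≺. Then the smallest relation ⊲_R on P containing R and closed under conditions (1)–(5) of a strong inclusion (namely the intersection of all relations on P containing R and closed under (1)–(5)) is a strong inclusion on P: in addition to (1)–(5) it is contained in ≺ and it interpolates. -/
/-- A relation on `P` is closed under conditions (1)–(5) of a strong inclusion. -/
def ClosedUnder15 {L : Type*} [Order.Frame L] (P : Set L) (r : L → L → Prop) : Prop :=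
  (r ⊥ ⊥ ∧ r ⊤ ⊤) ∧
  (∀ x a b y, x ∈ P → y ∈ P → x ≤ a → r a b → b ≤ y → r x y) ∧
  (∀ x a b, r x a → r x b → r x (a ⊓ b)) ∧
  (∀ x y a, r x a → r y a → r (x ⊔ y) a) ∧
  (∀ a b, r a b → r bᶜ aᶜ)

/-- The smallest relation containing `R` and closed under conditions (1)–(5) of a
strong inclusion on `P`: the intersection of all such relations. -/
def leastClosed15 {L : Type*} [Order.Frame L] (P : Set L) (R : L → L → Prop) :
    L → L → Prop :=
  fun x y => ∀ r : L → L → Prop, (∀ a b, R a b → r a b) → ClosedUnder15 P r → r x y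

/-- Lemma: if `R` is an interpolative relation on a sub-pcd-lattice `P`
contained in the well-inside relation, then the smallest relation containing `R`
and closed under conditions (1)–(5) is a strong inclusion on `P`. -/
theorem leastClosed15_isStrongInclusion
    {L : Type*} [Order.Frame L] (P : Set L) (hP : IsSubPcdLattice P)
    (R : L → L → Prop) (hRP : ∀ x y, R x y → x ∈ P ∧ y ∈ P)
    (hRint : Interpolative R) (hRwi : ∀ x y, R x y → WellInside x y) :
    IsStrongInclusion P (leastClosed15 P R) := by
  set D := leastClosed15 P R with hDdef
  have hDclosed : ClosedUnder15 P D := by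
    refine ⟨⟨fun r _ hr => hr.1.1, fun r _ hr => hr.1.2⟩, ?_, ?_, ?_, ?_⟩
    · intro x a b y hx hy hxa hab hby r hR hr
      exact hr.2.1 x a b y hx hy hxa (hab r hR hr) hby
    · intro x a b h1 h2 r hR hr
      exact hr.2.2.1 x a b (h1 r hR hr) (h2 r hR hr)
    · intro x y a h1 h2 r hR hr
      exact hr.2.2.2.1 x y a (h1 r hR hr) (h2 r hR hr)
    · intro a b h r hR hr
      exact hr.2.2.2.2 a b (h r hR hr)
  have hRD : ∀ a b, R a b → D a b := fun a b h r hR _ => hR a b h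
  obtain ⟨hbotP, htopP, hinfP, hsupP, hcomplP⟩ := hP
  -- membership: D is a relation on P
  have hmem : ∀ a b, D a b → a ∈ P ∧ b ∈ P := by
    intro a b h
    have key := h (fun x y => D x y ∧ x ∈ P ∧ y ∈ P)
      (fun x y hxy => ⟨hRD x y hxy, hRP x y hxy⟩) ?_
    · exact key.2
    · refine ⟨⟨⟨hDclosed.1.1, hbotP, hbotP⟩, ⟨hDclosed.1.2, htopP, htopP⟩⟩, ?_, ?_, ?_, ?_⟩
      · intro x a b y hx hy hxa hab hby
        exact ⟨hDclosed.2.1 x a b y hx hy hxa hab.1 hby, hx, hy⟩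
      · intro x a b h1 h2
        exact ⟨hDclosed.2.2.1 x a b h1.1 h2.1, h1.2.1, hinfP a h1.2.2 b h2.2.2⟩
      · intro x y a h1 h2
        exact ⟨hDclosed.2.2.2.1 x y a h1.1 h2.1, hsupP x h1.2.1 y h2.2.1, h1.2.2⟩
      · intro a b h1
        exact ⟨hDclosed.2.2.2.2 a b h1.1, hcomplP b h1.2.2, hcomplP a h1.2.1⟩
  -- condition (6): D is contained in the well-inside relation
  have hwi : ∀ a b, D a b → WellInside a b := by
    intro a b h
    have key := h (fun x y => D x y ∧ WellInside x y)
      (fun x y hxy => ⟨hRD x y hxy, hRwi x y hxy⟩) ?_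
    · exact key.2
    · refine ⟨⟨⟨hDclosed.1.1, by simp [WellInside]⟩, ⟨hDclosed.1.2, by simp [WellInside]⟩⟩,
        ?_, ?_, ?_, ?_⟩
      · intro x a b y hx hy hxa hab hby
        refine ⟨hDclosed.2.1 x a b y hx hy hxa hab.1 hby, ?_⟩
        have : aᶜ ⊔ b ≤ xᶜ ⊔ y := sup_le_sup (compl_le_compl hxa) hby
        exact eq_top_iff.2 (hab.2 ▸ this)
      · intro x a b h1 h2
        refine ⟨hDclosed.2.2.1 x a b h1.1 h2.1, ?_⟩
        unfold WellInside at *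
        rw [sup_inf_left, h1.2, h2.2, top_inf_eq]
      · intro x y a h1 h2
        refine ⟨hDclosed.2.2.2.1 x y a h1.1 h2.1, ?_⟩
        unfold WellInside at *
        rw [compl_sup, sup_inf_right, h1.2, h2.2, top_inf_eq]
      · intro a b h1
        refine ⟨hDclosed.2.2.2.2 a b h1.1, ?_⟩
        unfold WellInside at *
        refine eq_top_iff.2 ?_
        calc (⊤ : L) = aᶜ ⊔ b := h1.2.symm
          _ ≤ bᶜᶜ ⊔ aᶜ := sup_le le_sup_right (le_sup_of_le_left le_compl_compl)
  -- condition (7): interpolation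
  have hint : ∀ a b, D a b → ∃ z ∈ P, D a z ∧ D z b := by
    intro a b h
    have key := h (fun x y => D x y ∧ ∃ z ∈ P, D x z ∧ D z y)
      ?_ ?_
    · exact key.2
    · intro x y hxy
      obtain ⟨z, h1, h2⟩ := hRint x y hxy
      exact ⟨hRD x y hxy, z, (hRP x z h1).2, hRD x z h1, hRD z y h2⟩
    · refine ⟨⟨⟨hDclosed.1.1, ⊥, hbotP, hDclosed.1.1, hDclosed.1.1⟩,
        ⟨hDclosed.1.2, ⊤, htopP, hDclosed.1.2, hDclosed.1.2⟩⟩, ?_, ?_, ?_, ?_⟩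
      · intro x a b y hx hy hxa hab hby
        obtain ⟨hab', z, hz, h1, h2⟩ := hab
        exact ⟨hDclosed.2.1 x a b y hx hy hxa hab' hby, z, hz,
          hDclosed.2.1 x a z z hx hz hxa h1 le_rfl,
          hDclosed.2.1 z z b y hz hy le_rfl h2 hby⟩
      · intro x a b h1 h2
        obtain ⟨h1', z1, hz1, h1a, h1b⟩ := h1
        obtain ⟨h2', z2, hz2, h2a, h2b⟩ := h2
        refine ⟨hDclosed.2.2.1 x a b h1' h2', z1 ⊓ z2, hinfP z1 hz1 z2 hz2,
          hDclosed.2.2.1 x z1 z2 h1a h2a, hDclosed.2.2.1 _ a b ?_ ?_⟩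
        · exact hDclosed.2.1 _ z1 a a (hinfP z1 hz1 z2 hz2) (hmem z1 a h1b).2
            inf_le_left h1b le_rfl
        · exact hDclosed.2.1 _ z2 b b (hinfP z1 hz1 z2 hz2) (hmem z2 b h2b).2
            inf_le_right h2b le_rfl
      · intro x y a h1 h2
        obtain ⟨h1', z1, hz1, h1a, h1b⟩ := h1
        obtain ⟨h2', z2, hz2, h2a, h2b⟩ := h2
        refine ⟨hDclosed.2.2.2.1 x y a h1' h2', z1 ⊔ z2, hsupP z1 hz1 z2 hz2,
          hDclosed.2.2.2.1 _ _ _ ?_ ?_, hDclosed.2.2.2.1 z1 z2 a h1b h2b⟩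
        · exact hDclosed.2.1 x x z1 _ (hmem x z1 h1a).1 (hsupP z1 hz1 z2 hz2)
            le_rfl h1a le_sup_left
        · exact hDclosed.2.1 y y z2 _ (hmem y z2 h2a).1 (hsupP z1 hz1 z2 hz2)
            le_rfl h2a le_sup_right
      · intro a b h1
        obtain ⟨h1', z, hz, h1a, h1b⟩ := h1
        exact ⟨hDclosed.2.2.2.2 a b h1', zᶜ, hcomplP z hz,
          hDclosed.2.2.2.2 z b h1b, hDclosed.2.2.2.2 a z h1a⟩
  exact ⟨hDclosed.1, hDclosed.2.1, hDclosed.2.2.1, hDclosed.2.2.2.1,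
    hDclosed.2.2.2.2, hwi, hint⟩
end

section
/- Let M be a compact regular frame, B a sub-pcd-lattice of M that is a basis of M, L a frame, and f : M → L a frame homomorphism preserving pseudocomplements (f (aᶜ) = (f a)ᶜ for all a ∈ M). Let P be the smallest sub-pcd-lattice of L containing the image f '' B, and let ⊲_f be the smallest relation on P containing {(f b, f a) : a, b ∈ B, b ≺ a in M} and closed under conditions (1)–(5) of a strong inclusion. Then for all x, y ∈ P: x ⊲_f y if and only if there exist a, b ∈ B with b ≺ a, x ≤ f b and f a ≤ y. -/
/-- Explicit description of the strong inclusion generated by the image of the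
well-inside relation under a `*`-preserving frame homomorphism from a compact
regular frame. -/
theorem leastClosed15_image_iff
    {M L : Type*} [Order.Frame M] [Order.Frame L]
    (hMc : IsCompactFrame M) (hMr : IsRegularFrame M)
    (B : Set M) (hB : IsSubPcdLattice B) (hBbasis : IsBasis B)
    (f : FrameHom M L) (hfc : ∀ a : M, f aᶜ = (f a)ᶜ)
    (P : Set L) (hP : P = ⋂₀ {Q : Set L | IsSubPcdLattice Q ∧ f '' B ⊆ Q}) :
    ∀ x ∈ P, ∀ y ∈ P,
      leastClosed15 P
          (fun u v => ∃ a ∈ B, ∃ b ∈ B, WellInside b a ∧ u = f b ∧ v = f a) x y ↔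
        ∃ a ∈ B, ∃ b ∈ B, WellInside b a ∧ x ≤ f b ∧ f a ≤ y := by
  intro x hx y hy
  obtain ⟨hbB, htB, hmB, hsB, hcB⟩ := hB
  constructor
  · intro h
    refine h (fun u v => ∃ a ∈ B, ∃ b ∈ B, WellInside b a ∧ u ≤ f b ∧ f a ≤ v) ?_ ?_
    · rintro u v ⟨a, ha, b, hb, hba, rfl, rfl⟩
      exact ⟨a, ha, b, hb, hba, le_rfl, le_rfl⟩
    · refine ⟨⟨⟨⊥, hbB, ⊥, hbB, ?_, by simp, by simp⟩,
        ⟨⊤, htB, ⊤, htB, ?_, by simp, by simp⟩⟩, ?_, ?_, ?_, ?_⟩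
      · simp [WellInside]
      · simp [WellInside]
      · rintro x a b y _ _ hxa ⟨a', ha', b', hb', hw, h1, h2⟩ hby
        exact ⟨a', ha', b', hb', hw, hxa.trans h1, h2.trans hby⟩
      · rintro x a b ⟨a₁, ha₁, b₁, hb₁, hw₁, h₁, h₂⟩ ⟨a₂, ha₂, b₂, hb₂, hw₂, h₃, h₄⟩
        refine ⟨a₁ ⊓ a₂, hmB _ ha₁ _ ha₂, b₁ ⊓ b₂, hmB _ hb₁ _ hb₂, ?_, ?_, ?_⟩
        · refine eq_top_iff.mpr ?_
          calc (⊤ : M) = (b₁ᶜ ⊔ a₁) ⊓ (b₂ᶜ ⊔ a₂) := by rw [hw₁, hw₂, inf_top_eq]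
            _ ≤ ((b₁ ⊓ b₂)ᶜ ⊔ a₁) ⊓ ((b₁ ⊓ b₂)ᶜ ⊔ a₂) :=
              inf_le_inf (sup_le_sup_right (compl_anti inf_le_left) _)
                (sup_le_sup_right (compl_anti inf_le_right) _)
            _ = (b₁ ⊓ b₂)ᶜ ⊔ a₁ ⊓ a₂ := (sup_inf_left _ _ _).symm
        · rw [map_inf]; exact le_inf h₁ h₃
        · rw [map_inf]; exact inf_le_inf h₂ h₄
      · rintro x y a ⟨a₁, ha₁, b₁, hb₁, hw₁, h₁, h₂⟩ ⟨a₂, ha₂, b₂, hb₂, hw₂, h₃, h₄⟩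
        refine ⟨a₁ ⊔ a₂, hsB _ ha₁ _ ha₂, b₁ ⊔ b₂, hsB _ hb₁ _ hb₂, ?_, ?_, ?_⟩
        · refine eq_top_iff.mpr ?_
          calc (⊤ : M) = (b₁ᶜ ⊔ a₁) ⊓ (b₂ᶜ ⊔ a₂) := by rw [hw₁, hw₂, inf_top_eq]
            _ ≤ (b₁ᶜ ⊔ (a₁ ⊔ a₂)) ⊓ (b₂ᶜ ⊔ (a₁ ⊔ a₂)) :=
              inf_le_inf (sup_le_sup_left le_sup_left _) (sup_le_sup_left le_sup_right _)
            _ = b₁ᶜ ⊓ b₂ᶜ ⊔ (a₁ ⊔ a₂) := (sup_inf_right _ _ _).symm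
            _ = (b₁ ⊔ b₂)ᶜ ⊔ (a₁ ⊔ a₂) := by rw [compl_sup]
        · rw [map_sup]; exact sup_le (h₁.trans le_sup_left) (h₃.trans le_sup_right)
        · rw [map_sup]; exact sup_le h₂ h₄
      · rintro a b ⟨a', ha', b', hb', hw, h₁, h₂⟩
        refine ⟨b'ᶜ, hcB _ hb', a'ᶜ, hcB _ ha', ?_, ?_, ?_⟩
        · refine eq_top_iff.mpr ?_
          calc (⊤ : M) = b'ᶜ ⊔ a' := hw.symm
            _ ≤ a'ᶜᶜ ⊔ b'ᶜ := by
              rw [sup_comm]; exact sup_le_sup_right le_compl_compl _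
        · rw [hfc]; exact compl_anti h₂
        · rw [hfc]; exact compl_anti h₁
  · rintro ⟨a, ha, b, hb, hw, h₁, h₂⟩
    intro r hR ⟨_, h2, _, _, _⟩
    exact h2 x (f b) (f a) y hx hy h₁ (hR _ _ ⟨a, ha, b, hb, hw, rfl, rfl⟩) h₂
end
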